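/- arXiv:1803.04050 — 4 statements merged into one kernel-verified Lean document; each statement's English description precedes it below -/
import Mathlib

section
/- Let C be the triangle in ℚ³ given as the convex hull of e₂, e₃ and −e₂−e₃ (all lying in the plane {x₁ = 0}), and let x ∈ ℤ³ be a lattice point with first coordinate x₁ ≥ 2. If the only lattice points of the convex hull conv(C, x) are its four vertices e₂, e₃, −e₂−e₃, x and the origin, then x₁ = 3. -/
/-! Write `x = (n, y)` and `L₁ = u + v`, `L₂ = -2u + v`, `L₃ = u - 2v` for the facet functionals of
`C = {L ≤ 1}`. The lattice point `(k, w)`, `0 ≤ k ≤ n`, lies in `conv(C, x)` iff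
`n Lᵢ(w) - k Lᵢ(y) ≤ n - k` for all `i`. A triangle `{L ≤ c}` with `c₁ + c₂ + c₃ > 0` contains a
lattice point, so an empty slice at height `1` forces `∑ ⌈Lᵢ(y) / n⌉ ≤ 0`; since `∑ Lᵢ = 0`
this means `n ∣ Lᵢ(y)`, hence `n ∣ 3y`. Then `(3/n) x` (or `x/2` if `n = 2`) is a lattice point
on the segment from the origin to `x` at height `3` (resp. `1`), which forces `n = 3`. -/

open Finset

def pyramid (x : Fin 3 → ℚ) : Set (Fin 3 → ℚ) :=
  convexHull ℚ {![0, 1, 0], ![0, 0, 1], ![0, -1, -1], x}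

lemma exists_le_of_sum_pos {c₁ c₂ c₃ : ℤ} (h : 0 < c₁ + c₂ + c₃) :
    ∃ u v : ℤ, u + v ≤ c₁ ∧ -2 * u + v ≤ c₂ ∧ u - 2 * v ≤ c₃ := by
  by_contra! hne
  -- Each candidate lies on a line `Lᵢ = cᵢ` and meets the next constraint by rounding; checking
  -- residues mod 3, one of them meets all three once the sum is positive.
  have h₁ := hne ((c₁ - c₂ + 2) / 3) (c₁ - (c₁ - c₂ + 2) / 3)
  have h₂ := hne ((c₂ - c₃ + 2) / 3 - c₂) (2 * ((c₂ - c₃ + 2) / 3) - c₂)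
  have h₃ := hne (c₃ + 2 * ((c₁ - c₃) / 3)) ((c₁ - c₃) / 3)
  omega

lemma le_mul_add_sub_one_ediv_le {a n : ℤ} (hn : 0 < n) :
    a ≤ n * ((a + (n - 1)) / n) ∧ n * ((a + (n - 1)) / n) ≤ a + (n - 1) := by
  have := Int.lt_mul_ediv_self_add (x := a + (n - 1)) hn
  exact ⟨by linarith, Int.mul_ediv_self_le hn.ne'⟩

lemma dvd_three_mul_of_forall_not_le {n y₁ y₂ : ℤ} (hn : 0 < n)
    (h : ∀ w₁ w₂ : ℤ, n * (w₁ + w₂) - (y₁ + y₂) ≤ n - 1 →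
      n * (-2 * w₁ + w₂) - (-2 * y₁ + y₂) ≤ n - 1 →
      n * (w₁ - 2 * w₂) - (y₁ - 2 * y₂) ≤ n - 1 → False) :
    n ∣ 3 * y₁ ∧ n ∣ 3 * y₂ := by
  obtain ⟨hlo₁, hhi₁⟩ := le_mul_add_sub_one_ediv_le (a := y₁ + y₂) hn
  obtain ⟨hlo₂, hhi₂⟩ := le_mul_add_sub_one_ediv_le (a := -2 * y₁ + y₂) hn
  obtain ⟨hlo₃, hhi₃⟩ := le_mul_add_sub_one_ediv_le (a := y₁ - 2 * y₂) hn
  -- `cᵢ = ⌈Lᵢ(y) / n⌉`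
  set c₁ := (y₁ + y₂ + (n - 1)) / n
  set c₂ := (-2 * y₁ + y₂ + (n - 1)) / n
  set c₃ := (y₁ - 2 * y₂ + (n - 1)) / n
  have hsum : c₁ + c₂ + c₃ ≤ 0 := by
    by_contra! hpos
    obtain ⟨u, v, h₁, h₂, h₃⟩ := exists_le_of_sum_pos hpos
    refine h u v ?_ ?_ ?_
    · nlinarith
    · nlinarith
    · nlinarith
  have hsum' : n * (c₁ + c₂ + c₃) ≤ 0 := mul_nonpos_of_nonneg_of_nonpos hn.le hsum
  exact ⟨⟨c₁ - c₂, by linarith⟩, ⟨c₁ - c₃, by linarith⟩⟩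

lemma smul_add_mem_pyramid (x : Fin 3 → ℚ) {t u v : ℚ} (ht : 0 ≤ t)
    (h₁ : u + v ≤ 1 - t) (h₂ : -2 * u + v ≤ 1 - t) (h₃ : u - 2 * v ≤ 1 - t) :
    t • x + ![0, u, v] ∈ pyramid x := by
  unfold pyramid
  -- `(1 - t - L₂, 1 - t - L₃, 1 - t - L₁) / 3` are `(1 - t)` times the barycentric coordinates of
  -- `(u, v) / (1 - t)` with respect to the vertices of `C`.
  set w : Fin 4 → ℚ := ![(1 - t - (-2 * u + v)) / 3, (1 - t - (u - 2 * v)) / 3,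
    (1 - t - (u + v)) / 3, t]
  set z : Fin 4 → Fin 3 → ℚ := ![![0, 1, 0], ![0, 0, 1], ![0, -1, -1], x]
  have hw : ∀ i ∈ univ, 0 ≤ w i := by
    intro i _
    fin_cases i <;> simp [w] <;> linarith
  have hz : ∀ i ∈ univ, z i ∈ convexHull ℚ {![0, 1, 0], ![0, 0, 1], ![0, -1, -1], x} := by
    intro i _
    apply subset_convexHull
    fin_cases i <;> simp [z]
  convert (convex_convexHull ℚ _).sum_mem hw (by simp [w, Fin.sum_univ_four]; ring) hz using 1
  funext j
  fin_cases j <;> simp [w, z, Fin.sum_univ_four] <;> ring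

lemma intCast_mem_pyramid {x : Fin 3 → ℤ} (hn : 0 < x 0) {k w₁ w₂ : ℤ} (hk : 0 ≤ k)
    (h₁ : x 0 * (w₁ + w₂) - k * (x 1 + x 2) ≤ x 0 - k)
    (h₂ : x 0 * (-2 * w₁ + w₂) - k * (-2 * x 1 + x 2) ≤ x 0 - k)
    (h₃ : x 0 * (w₁ - 2 * w₂) - k * (x 1 - 2 * x 2) ≤ x 0 - k) :
    ![(k : ℚ), w₁, w₂] ∈ pyramid (fun i => (x i : ℚ)) := by
  have hnQ : (0 : ℚ) < x 0 := by exact_mod_cast hn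
  set t : ℚ := k / x 0
  have key := smul_add_mem_pyramid (fun i => (x i : ℚ)) (t := t)
    (u := w₁ - t * x 1) (v := w₂ - t * x 2) (by positivity) ?_ ?_ ?_
  · convert key using 1
    funext j
    fin_cases j <;> simp [t]
    field_simp
  all_goals
    have h₁' : (x 0 : ℚ) * (w₁ + w₂) - k * (x 1 + x 2) ≤ x 0 - k := by exact_mod_cast h₁
    have h₂' : (x 0 : ℚ) * (-2 * w₁ + w₂) - k * (-2 * x 1 + x 2) ≤ x 0 - k := by exact_mod_cast h₂
    have h₃' : (x 0 : ℚ) * (w₁ - 2 * w₂) - k * (x 1 - 2 * x 2) ≤ x 0 - k := by exact_mod_cast h₃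
    simp only [t]
    field_simp
    linarith

lemma apply_zero_eq_zero_or_eq_of_mem {x p : Fin 3 → ℚ}
    (hp : p ∈ ({![0, 1, 0], ![0, 0, 1], ![0, -1, -1], x, 0} : Set (Fin 3 → ℚ))) :
    p 0 = 0 ∨ p 0 = x 0 := by
  simp only [Set.mem_insert_iff, Set.mem_singleton_iff] at hp
  rcases hp with rfl | rfl | rfl | rfl | rfl <;> simp

/-- Let `C = conv(e₂, e₃, -e₂-e₃)` in `ℚ³` and `x ∈ ℤ³` with `x₁ ≥ 2`.
If the only lattice points of `conv(C, x)` are its four vertices and the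
origin, then `x₁ = 3`. -/
theorem shadow_lemma (x : Fin 3 → ℤ) (hx : 2 ≤ x 0)
    (h : ∀ p ∈ convexHull ℚ
        ({![0, 1, 0], ![0, 0, 1], ![0, -1, -1], fun i => (x i : ℚ)} :
          Set (Fin 3 → ℚ)),
      (∀ i, ∃ z : ℤ, p i = (z : ℚ)) →
      p ∈ ({![0, 1, 0], ![0, 0, 1], ![0, -1, -1], fun i => (x i : ℚ), 0} :
          Set (Fin 3 → ℚ))) :
    x 0 = 3 := by
  have hn : 0 < x 0 := by omega
  have height : ∀ k w₁ w₂ : ℤ, ![(k : ℚ), w₁, w₂] ∈ pyramid (fun i => (x i : ℚ)) →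
      k = 0 ∨ k = x 0 := by
    intro k w₁ w₂ hp
    have hint : ∀ i, ∃ z : ℤ, ![(k : ℚ), w₁, w₂] i = z :=
      fun i => ⟨![k, w₁, w₂] i, by fin_cases i <;> rfl⟩
    simpa using apply_zero_eq_zero_or_eq_of_mem (h _ hp hint)
  obtain ⟨⟨a, ha⟩, ⟨b, hb⟩⟩ : x 0 ∣ 3 * x 1 ∧ x 0 ∣ 3 * x 2 := by
    refine dvd_three_mul_of_forall_not_le hn fun w₁ w₂ h₁ h₂ h₃ => ?_
    have := height 1 w₁ w₂ (intCast_mem_pyramid hn zero_le_one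
      (by linarith) (by linarith) (by linarith))
    omega
  rcases (show x 0 = 2 ∨ 3 ≤ x 0 by omega) with h2 | h3
  · obtain ⟨⟨a', ha'⟩, ⟨b', hb'⟩⟩ : 2 ∣ x 1 ∧ 2 ∣ x 2 := by rw [h2] at ha hb; omega
    have := height 1 a' b' (intCast_mem_pyramid hn zero_le_one
      (by rw [h2]; linarith) (by rw [h2]; linarith) (by rw [h2]; linarith))
    omega
  · have := height 3 a b (intCast_mem_pyramid hn (by norm_num)
      (by linarith) (by linarith) (by linarith))
    omega
end

section
/- Let σ ⊆ ℚ^d be a pointed full-dimensional cone with d+1 extremal rays generated by v₁,…,v_{d+1}, with Gale dual w₁,…,w_{d+1}. Let D₋ = {i : w_i < 0}, D₀ = {i : w_i = 0}, D₊ = {i : w_i > 0}. For I ⊆ {1,…,d+1} set σ_I = cone(v_i; i ∈ I). Then the relative interior of σ_I is contained in the interior of σ if and only if D₋ ∪ D₀ ⊆ I or D₊ ∪ D₀ ⊆ I. -/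
/-- The cone generated by the vectors `v i` with `i ∈ I`. -/
def coneOn {n d : ℕ} (v : Fin n → (Fin d → ℚ)) (I : Set (Fin n)) :
    Set (Fin d → ℚ) :=
  {x | ∃ c : Fin n → ℚ, (∀ i, 0 ≤ c i) ∧ (∀ i, i ∉ I → c i = 0) ∧
    x = ∑ i, c i • v i}

/-!
The coefficient map `c ↦ ∑ i, c i • v i` is onto `ℚ^d` with kernel `ℚ • w`. Hence the interior
of `σ` consists of the combinations with all coefficients positive, the relative interior of
`σ_I` of those with positive coefficients exactly on `I`, and two representations of one point
differ by a multiple of `w`. If `w i > 0` for every `i ∉ I`, adding a small positive multiple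
of `w` to a representation supported on `I` makes every coefficient positive. Otherwise there
are `a, b ∉ I` with `w a ≤ 0 ≤ w b`; a positive representation `c'` of a point of `σ_I` would
give `c' a = t * w a > 0` and `c' b = t * w b > 0`, which is impossible. So `σ_I` misses the
interior of `σ`, while its relative interior is nonempty.
-/

open Set Filter Topology Submodule

theorem LinearMap.exists_rightInvOn_range {K V V' : Type*} [DivisionRing K] [AddCommGroup V]
    [Module K V] [AddCommGroup V'] [Module K V'] (f : V →ₗ[K] V') :
    ∃ g : V' →ₗ[K] V, RightInvOn g f (LinearMap.range f) := by
  obtain ⟨h, hh⟩ := f.rangeRestrict.exists_rightInverse_of_surjective f.range_rangeRestrict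
  obtain ⟨g, hg⟩ := LinearMap.exists_extend h
  refine ⟨g, fun y hy => ?_⟩
  have hgy : g y = h ⟨y, hy⟩ := LinearMap.congr_fun hg ⟨y, hy⟩
  simpa [hgy] using congr_arg Subtype.val (LinearMap.congr_fun hh ⟨y, hy⟩)

theorem exists_pos_forall_add_mul_pos {ι 𝕜 : Type*} [Finite ι] [Field 𝕜] [LinearOrder 𝕜]
    [IsStrictOrderedRing 𝕜] [TopologicalSpace 𝕜] [OrderTopology 𝕜] {a b : ι → 𝕜}
    (ha : ∀ i, 0 ≤ a i) (hb : ∀ i, a i = 0 → 0 < b i) :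
    ∃ s > 0, ∀ i, 0 < a i + s * b i := by
  have : ∀ᶠ s in 𝓝[>] (0 : 𝕜), ∀ i, 0 < a i + s * b i := by
    refine eventually_all.2 fun i => ?_
    rcases (ha i).eq_or_lt with hai | hai
    · filter_upwards [self_mem_nhdsWithin] with s hs
      rw [← hai, zero_add]
      exact mul_pos hs (hb i hai.symm)
    · refine nhdsWithin_le_nhds (Tendsto.eventually_const_lt hai ?_)
      have hcont : Continuous fun s : 𝕜 => a i + s * b i := by fun_prop
      simpa using hcont.tendsto 0
  exact (this.and self_mem_nhdsWithin).exists.imp fun s hs => ⟨hs.2, hs.1⟩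

theorem eventually_add_smul_mem_of_mem_intrinsicInterior {𝕜 V : Type*} [Ring 𝕜]
    [TopologicalSpace 𝕜] [AddCommGroup V] [Module 𝕜 V] [TopologicalSpace V] [ContinuousAdd V]
    [ContinuousSMul 𝕜 V] {s : Set V} {x y : V} (hx : x ∈ intrinsicInterior 𝕜 s)
    (hy : y ∈ (affineSpan 𝕜 s).direction) :
    ∀ᶠ t in 𝓝 (0 : 𝕜), x + t • y ∈ s := by
  obtain ⟨z, hz, rfl⟩ := hx
  let f : 𝕜 → affineSpan 𝕜 s := fun t =>
    ⟨z + t • y, add_comm (t • y) z ▸ AffineSubspace.vadd_mem_of_mem_direction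
      (Submodule.smul_mem _ t hy) z.2⟩
  have hf : Continuous f :=
    (continuous_const.add (continuous_id.smul continuous_const)).subtype_mk _
  have hf0 : f 0 = z := Subtype.ext (by simp [f])
  filter_upwards [hf.continuousAt.preimage_mem_nhds (isOpen_interior.mem_nhds (hf0 ▸ hz))]
    with t ht using (interior_subset ht : f t ∈ Subtype.val ⁻¹' s)

section Cone

variable {n d : ℕ}

theorem coneOn_eq_coneOn_indicator (v : Fin n → Fin d → ℚ) (I : Set (Fin n)) :
    coneOn v I = coneOn (I.indicator v) univ := by
  have hsum (c : Fin n → ℚ) : ∑ i, c i • I.indicator v i = ∑ i, I.indicator c i • v i :=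
    Finset.sum_congr rfl fun i _ => by rw [← indicator_smul_apply, indicator_smul_apply_left]
  ext x
  constructor
  · rintro ⟨c, hc, hcI, rfl⟩
    refine ⟨c, hc, by simp, ?_⟩
    rw [hsum]
    refine Finset.sum_congr rfl fun i _ => ?_
    by_cases hi : i ∈ I
    · rw [indicator_of_mem hi]
    · rw [indicator_of_notMem hi, hcI i hi]
  · rintro ⟨c, hc, -, rfl⟩
    exact ⟨I.indicator c, fun i => indicator_nonneg (fun i _ => hc i) i,
      fun i hi => indicator_of_notMem hi c, hsum c⟩

theorem coneOn_subset_span (v : Fin n → Fin d → ℚ) (I : Set (Fin n)) :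
    coneOn v I ⊆ span ℚ (range v) := by
  rintro _ ⟨c, -, -, rfl⟩
  exact sum_mem fun i _ => smul_mem _ _ (subset_span (mem_range_self i))

theorem exists_pos_of_mem_intrinsicInterior_coneOn {v : Fin n → Fin d → ℚ} {x : Fin d → ℚ}
    (hx : x ∈ intrinsicInterior ℚ (coneOn v univ)) :
    ∃ c : Fin n → ℚ, (∀ i, 0 < c i) ∧ x = ∑ i, c i • v i := by
  have hone : ∑ i, v i ∈ coneOn v univ := ⟨1, fun _ => zero_le_one, by simp, by simp⟩
  have hzero : (0 : Fin d → ℚ) ∈ coneOn v univ := ⟨0, fun _ => le_rfl, by simp, by simp⟩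
  have hdir := AffineSubspace.vsub_mem_direction (mem_affineSpan ℚ hone) (mem_affineSpan ℚ hzero)
  have hnear : ∀ᶠ t in 𝓝[<] (0 : ℚ), x + t • (∑ i, v i -ᵥ 0) ∈ coneOn v univ :=
    nhdsWithin_le_nhds (eventually_add_smul_mem_of_mem_intrinsicInterior hx hdir)
  obtain ⟨t, ⟨c, hc, -, hxc⟩, ht⟩ := (hnear.and self_mem_nhdsWithin).exists
  refine ⟨fun i => c i - t, fun i => by linarith [hc i, show t < 0 from ht], ?_⟩
  simp only [sub_smul, Finset.sum_sub_distrib, ← Finset.smul_sum, ← hxc, vsub_eq_sub, sub_zero]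
  abel

theorem exists_isOpen_inter_span_subset_coneOn (v : Fin n → Fin d → ℚ) {c : Fin n → ℚ}
    (hc : ∀ i, 0 < c i) :
    ∃ U : Set (Fin d → ℚ), IsOpen U ∧ ∑ i, c i • v i ∈ U ∧
      U ∩ span ℚ (range v) ⊆ coneOn v univ := by
  set φ := Fintype.linearCombination ℚ v
  -- `y ↦ c + g (y - φ c)` writes every point of the span near `φ c` with positive coefficients
  obtain ⟨g, hg⟩ := φ.exists_rightInvOn_range
  refine ⟨(fun y => c + g (y - φ c)) ⁻¹' univ.pi fun _ => Ioi 0, ?_, ?_, ?_⟩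
  · exact (isOpen_set_pi finite_univ fun _ _ => isOpen_Ioi).preimage
      (continuous_const.add (g.continuous_on_pi.comp (continuous_id.sub continuous_const)))
  · simpa [φ, Fintype.linearCombination_apply] using hc
  · rintro y ⟨hyU, hyspan⟩
    rw [← Fintype.range_linearCombination] at hyspan
    refine ⟨c + g (y - φ c), fun i => (hyU i (mem_univ i)).le, by simp, ?_⟩
    rw [← Fintype.linearCombination_apply, map_add,
      hg (sub_mem hyspan (LinearMap.mem_range_self φ c))]
    abel

theorem sum_smul_mem_interior_coneOn {v : Fin n → Fin d → ℚ}
    (hfull : span ℚ (range v) = ⊤) {c : Fin n → ℚ} (hc : ∀ i, 0 < c i) :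
    ∑ i, c i • v i ∈ interior (coneOn v univ) := by
  obtain ⟨U, hUo, hxU, hU⟩ := exists_isOpen_inter_span_subset_coneOn v hc
  exact interior_maximal (fun y hy => hU ⟨hy, by simp [hfull]⟩) hUo hxU

theorem sum_smul_mem_intrinsicInterior_coneOn (v : Fin n → Fin d → ℚ) {c : Fin n → ℚ}
    (hc : ∀ i, 0 < c i) :
    ∑ i, c i • v i ∈ intrinsicInterior ℚ (coneOn v univ) := by
  obtain ⟨U, hUo, hxU, hU⟩ := exists_isOpen_inter_span_subset_coneOn v hc
  have hspan : (affineSpan ℚ (coneOn v univ) : Set (Fin d → ℚ)) ⊆ span ℚ (range v) :=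
    affineSpan_subset_span.trans (span_le.2 (coneOn_subset_span v univ))
  refine ⟨⟨_, mem_affineSpan ℚ ⟨c, fun i => (hc i).le, by simp, rfl⟩⟩,
    interior_maximal (fun (y : affineSpan ℚ _) hy => hU ⟨hy, hspan y.2⟩)
      (hUo.preimage continuous_subtype_val) hxU, rfl⟩

theorem exists_pos_on_of_mem_intrinsicInterior_coneOn {v : Fin n → Fin d → ℚ} {I : Set (Fin n)}
    {x : Fin d → ℚ} (hx : x ∈ intrinsicInterior ℚ (coneOn v I)) :
    ∃ c : Fin n → ℚ, (∀ i ∈ I, 0 < c i) ∧ (∀ i ∉ I, c i = 0) ∧ x = ∑ i, c i • v i := by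
  rw [coneOn_eq_coneOn_indicator] at hx
  obtain ⟨c, hc, rfl⟩ := exists_pos_of_mem_intrinsicInterior_coneOn hx
  refine ⟨I.indicator c, fun i hi => by simpa [hi] using hc i,
    fun i hi => indicator_of_notMem hi c, Finset.sum_congr rfl fun i _ => ?_⟩
  rw [← indicator_smul_apply, indicator_smul_apply_left]

theorem intrinsicInterior_coneOn_nonempty (v : Fin n → Fin d → ℚ) (I : Set (Fin n)) :
    (intrinsicInterior ℚ (coneOn v I)).Nonempty := by
  rw [coneOn_eq_coneOn_indicator]
  exact ⟨_, sum_smul_mem_intrinsicInterior_coneOn _ fun _ => one_pos⟩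

end Cone

section GaleDual

variable {n d : ℕ} {v : Fin n → Fin d → ℚ} {w : Fin n → ℚ} {I : Set (Fin n)}

theorem intrinsicInterior_coneOn_subset_interior (hfull : span ℚ (range v) = ⊤)
    (hker : ∑ i, w i • v i = 0) (hI : ∀ i ∉ I, 0 < w i) :
    intrinsicInterior ℚ (coneOn v I) ⊆ interior (coneOn v univ) := by
  intro x hx
  obtain ⟨c, hcI, hc0, rfl⟩ := exists_pos_on_of_mem_intrinsicInterior_coneOn hx
  have hc : ∀ i, 0 ≤ c i := fun i => by
    by_cases hi : i ∈ I
    exacts [(hcI i hi).le, (hc0 i hi).ge]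
  obtain ⟨s, -, hs⟩ := exists_pos_forall_add_mul_pos hc fun i hci =>
    hI i fun hi => (hcI i hi).ne' hci
  have hshift : ∑ i, (c i + s * w i) • v i = ∑ i, c i • v i := by
    simp only [add_smul, mul_smul, Finset.sum_add_distrib, ← Finset.smul_sum, hker, smul_zero,
      add_zero]
  exact hshift ▸ sum_smul_mem_interior_coneOn hfull hs

theorem disjoint_coneOn_interior
    (hspan : ∀ c : Fin n → ℚ, ∑ i, c i • v i = 0 → ∃ t : ℚ, c = t • w) {a b : Fin n}
    (ha : a ∉ I) (hb : b ∉ I) (hwa : w a ≤ 0) (hwb : 0 ≤ w b) :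
    Disjoint (coneOn v I) (interior (coneOn v univ)) := by
  rw [disjoint_left]
  rintro x ⟨c, -, hcI, rfl⟩ hx
  obtain ⟨c', hc', hx'⟩ :=
    exists_pos_of_mem_intrinsicInterior_coneOn (interior_subset_intrinsicInterior hx)
  obtain ⟨t, ht⟩ := hspan (c' - c) (by simp [sub_smul, Finset.sum_sub_distrib, ← hx'])
  have hta : c' a = t * w a := by simpa [hcI a ha] using congr_fun ht a
  have htb : c' b = t * w b := by simpa [hcI b hb] using congr_fun ht b
  rcases le_or_gt 0 t with ht0 | ht0
  · exact (hc' a).not_ge (hta ▸ mul_nonpos_of_nonneg_of_nonpos ht0 hwa)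
  · exact (hc' b).not_ge (htb ▸ mul_nonpos_of_nonpos_of_nonneg ht0.le hwb)

end GaleDual

theorem gale_relint_criterion_general (d : ℕ)
    (v : Fin (d + 1) → (Fin d → ℚ)) (w : Fin (d + 1) → ℚ)
    (hfull : Submodule.span ℚ (Set.range v) = ⊤)
    (hker : ∑ i, w i • v i = 0)
    (hspan : ∀ c : Fin (d + 1) → ℚ, ∑ i, c i • v i = 0 → ∃ t : ℚ, c = t • w)
    (I : Set (Fin (d + 1))) :
    intrinsicInterior ℚ (coneOn v I) ⊆ interior (coneOn v Set.univ) ↔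
    ({i | w i < 0} ∪ {i | w i = 0} ⊆ I ∨ {i | 0 < w i} ∪ {i | w i = 0} ⊆ I) := by
  constructor
  · intro hsub
    by_contra! hnot
    obtain ⟨⟨a, haw, ha⟩, ⟨b, hbw, hb⟩⟩ := And.imp not_subset.1 not_subset.1 hnot
    obtain ⟨x, hx⟩ := intrinsicInterior_coneOn_nonempty v I
    exact (disjoint_coneOn_interior hspan ha hb (le_iff_lt_or_eq.2 haw)
      (le_iff_lt_or_eq.2 (hbw.imp_right Eq.symm))).notMem_of_mem_left
      (intrinsicInterior_subset hx) (hsub hx)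
  · rintro (hA | hB)
    · exact intrinsicInterior_coneOn_subset_interior hfull hker fun i hi =>
        lt_of_not_ge fun h => hi (hA (le_iff_lt_or_eq.1 h))
    · refine intrinsicInterior_coneOn_subset_interior (w := -w) hfull
        (by simp [neg_smul, hker]) fun i hi => neg_pos.2 ?_
      exact lt_of_not_ge fun h => hi (hB ((le_iff_lt_or_eq.1 h).imp_right Eq.symm))

/-- Gale duality, part (iii): the relative interior of `σ_I` is contained in
the interior of `σ` if and only if `D₋ ∪ D₀ ⊆ I` or `D₊ ∪ D₀ ⊆ I`. -/
theorem gale_relint_criterion (d : ℕ) (hd : 3 ≤ d)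
    (v : Fin (d + 1) → (Fin d → ℚ)) (w : Fin (d + 1) → ℚ)
    (hpointed : ∀ x, x ∈ coneOn v Set.univ → -x ∈ coneOn v Set.univ → x = 0)
    (hfull : Submodule.span ℚ (Set.range v) = ⊤)
    (hextremal : ∀ i, v i ∉ coneOn v {j | j ≠ i})
    (hw0 : w ≠ 0)
    (hker : ∑ i, w i • v i = 0)
    (hspan : ∀ c : Fin (d + 1) → ℚ, ∑ i, c i • v i = 0 → ∃ t : ℚ, c = t • w)
    (I : Set (Fin (d + 1))) :
    intrinsicInterior ℚ (coneOn v I) ⊆ interior (coneOn v Set.univ) ↔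
    ({i | w i < 0} ∪ {i | w i = 0} ⊆ I ∨ {i | 0 < w i} ∪ {i | w i = 0} ⊆ I) :=
  gale_relint_criterion_general d v w hfull hker hspan I
end

section
/- Let a, b ∈ ℤ with 0 ≤ a < b and suppose the planar hexagon with vertices u₁ = (a/2, b/2), u₂ = u₁ + (1/2, 0), u₃ = (−1/2, 0), u₄ = (1/2, 0), u₅ = (−(a+1)/2, −b/2), u₆ = u₅ + (1/2, 0) contains no lattice point of ℤ² other than the origin (in its convex hull). Then (a, b) = (0, 1) or (a, b) = (1, 3). -/
lemma combo4 {s : Set (Fin 2 → ℚ)} {x y z w : Fin 2 → ℚ}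
    (hx : x ∈ s) (hy : y ∈ s) (hz : z ∈ s) (hw : w ∈ s)
    {α β γ δ : ℚ} (hα : 0 ≤ α) (hβ : 0 ≤ β) (hγ : 0 ≤ γ) (hδ : 0 ≤ δ)
    (hsum : α + β + γ + δ = 1) :
    α • x + β • y + γ • z + δ • w ∈ convexHull ℚ s := by
  have h := Finset.centerMass_mem_convexHull (t := (Finset.univ : Finset (Fin 4)))
    (w := ![α,β,γ,δ]) (z := ![x,y,z,w]) (s := s) ?_ ?_ ?_
  · convert h using 1
    rw [Finset.centerMass]
    simp [Fin.sum_univ_four, hsum]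
  · intro i _; fin_cases i <;> simpa using by assumption
  · simp [Fin.sum_univ_four, hsum]
  · intro i _; fin_cases i <;> simpa using by assumption

/-- The lattice-point computation in Situation 1A: if the hexagon with the
listed vertices contains no lattice point other than the origin, then
`(a,b) = (0,1)` or `(a,b) = (1,3)`. -/
theorem situation1A_lattice (a b : ℤ) (ha : 0 ≤ a) (hab : a < b)
    (h : ∀ p ∈ convexHull ℚ
        ({![(a : ℚ) / 2, (b : ℚ) / 2],
          ![(a : ℚ) / 2 + 1 / 2, (b : ℚ) / 2],
          ![-(1 : ℚ) / 2, 0],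
          ![(1 : ℚ) / 2, 0],
          ![-((a : ℚ) + 1) / 2, -(b : ℚ) / 2],
          ![-((a : ℚ) + 1) / 2 + 1 / 2, -(b : ℚ) / 2]} : Set (Fin 2 → ℚ)),
      (∀ i, ∃ z : ℤ, p i = (z : ℚ)) → p = 0) :
    (a = 0 ∧ b = 1) ∨ (a = 1 ∧ b = 3) := by
  set S : Set (Fin 2 → ℚ) :=
        ({![(a : ℚ) / 2, (b : ℚ) / 2],
          ![(a : ℚ) / 2 + 1 / 2, (b : ℚ) / 2],
          ![-(1 : ℚ) / 2, 0],
          ![(1 : ℚ) / 2, 0],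
          ![-((a : ℚ) + 1) / 2, -(b : ℚ) / 2],
          ![-((a : ℚ) + 1) / 2 + 1 / 2, -(b : ℚ) / 2]} : Set (Fin 2 → ℚ)) with hS
  have hb1 : (1:ℤ) ≤ b := by omega
  have hbQ : (0:ℚ) < (b:ℚ) := by exact_mod_cast (by omega : (0:ℤ) < b)
  have hbne : ((b:ℚ)) ≠ 0 := ne_of_gt hbQ
  have hv1 : ![(a : ℚ) / 2, (b : ℚ) / 2] ∈ S := by simp [hS]
  have hv2 : ![(a : ℚ) / 2 + 1 / 2, (b : ℚ) / 2] ∈ S := by simp [hS]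
  have hv3 : ![-(1 : ℚ) / 2, 0] ∈ S := by simp [hS]
  have hv4 : ![(1 : ℚ) / 2, 0] ∈ S := by simp [hS]
  rcases Int.even_or_odd b with ⟨k, hk⟩ | ⟨k, hk⟩
  · exfalso
    have hk1 : (1:ℤ) ≤ k := by omega
    have hkq : (b:ℚ) = (k:ℚ) + (k:ℚ) := by exact_mod_cast hk
    rcases Int.even_or_odd a with ⟨m, hm⟩ | ⟨m, hm⟩
    · have hmq : (a:ℚ) = (m:ℚ)+(m:ℚ) := by exact_mod_cast hm
      have := h _ (subset_convexHull ℚ S hv1) (by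
        intro i; fin_cases i
        · exact ⟨m, by simp [hmq]; try ring⟩
        · exact ⟨k, by simp [hkq]; try ring⟩)
      have := congrFun this 1
      simp [hkq] at this
      have : (k:ℚ) = 0 := by linarith
      exact absurd this (by exact_mod_cast (by omega : (k:ℤ) ≠ 0))
    · have hmq : (a:ℚ) = 2*(m:ℚ)+1 := by exact_mod_cast hm
      have := h _ (subset_convexHull ℚ S hv2) (by
        intro i; fin_cases i
        · exact ⟨m+1, by simp [hmq]; push_cast; try ring⟩
        · exact ⟨k, by simp [hkq]; try ring⟩)
      have := congrFun this 1
      simp [hkq] at this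
      have : (k:ℚ) = 0 := by linarith
      exact absurd this (by exact_mod_cast (by omega : (k:ℤ) ≠ 0))
  · by_cases hb3 : b = 1
    · left; constructor <;> omega
    have hb3' : (3:ℤ) ≤ b := by omega
    rcases lt_trichotomy (2*a) (b-1) with hc | hc | hc
    · exfalso
      have hcc : 2*a + 2 ≤ b := by omega
      have hn1 : (0:ℚ) ≤ (b:ℚ)-2+2*(a:ℚ) := by
        have : (0:ℚ) ≤ ((b-2+2*a : ℤ) : ℚ) := by exact_mod_cast (by omega : (0:ℤ) ≤ b-2+2*a)
        push_cast at this; linarith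
      have hn2 : (0:ℚ) ≤ (b:ℚ)-2-2*(a:ℚ) := by
        have : (0:ℚ) ≤ ((b-2-2*a : ℤ) : ℚ) := by exact_mod_cast (by omega : (0:ℤ) ≤ b-2-2*a)
        push_cast at this; linarith
      have hp : ![(0:ℚ), 1] ∈ convexHull ℚ S := by
        have heq : ![(0:ℚ), 1] =
            (((b:ℚ)-2+2*(a:ℚ))/(2*(b:ℚ))) • ![-(1 : ℚ) / 2, 0]
            + (((b:ℚ)-2-2*(a:ℚ))/(2*(b:ℚ))) • ![(1 : ℚ) / 2, 0]
            + ((2:ℚ)/(b:ℚ)) • ![(a : ℚ) / 2, (b : ℚ) / 2]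
            + (0:ℚ) • ![(a : ℚ) / 2 + 1 / 2, (b : ℚ) / 2] := by
          funext i; fin_cases i <;> simp <;> field_simp <;> ring
        rw [heq]
        apply combo4 hv3 hv4 hv1 hv2
        · exact div_nonneg hn1 (by linarith)
        · exact div_nonneg hn2 (by linarith)
        · positivity
        · exact le_refl 0
        · field_simp; ring
      have := h _ hp (by intro i; fin_cases i; exacts [⟨0, by norm_num⟩, ⟨1, by norm_num⟩])
      have := congrFun this 1
      simp at this
    · have hba : b = 2*a+1 := by omega
      by_cases ha1 : a = 1
      · right; constructor <;> omega
      exfalso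
      have hb5 : (5:ℤ) ≤ b := by omega
      have hn1 : (0:ℚ) ≤ (b:ℚ)-4 := by
        have : (0:ℚ) ≤ ((b-4 : ℤ) : ℚ) := by exact_mod_cast (by omega : (0:ℤ) ≤ b-4)
        push_cast at this; linarith
      have hbq : (b:ℚ) = 2*(a:ℚ)+1 := by exact_mod_cast hba
      have hp : ![(1:ℚ), 2] ∈ convexHull ℚ S := by
        have heq : ![(1:ℚ), 2] =
            (((b:ℚ)-4)/(2*(b:ℚ))) • ![-(1 : ℚ) / 2, 0]
            + (((b:ℚ)-4)/(2*(b:ℚ))) • ![(1 : ℚ) / 2, 0]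
            + ((2:ℚ)/(b:ℚ)) • ![(a : ℚ) / 2, (b : ℚ) / 2]
            + ((2:ℚ)/(b:ℚ)) • ![(a : ℚ) / 2 + 1 / 2, (b : ℚ) / 2] := by
          funext i; fin_cases i <;> simp [hbq] <;> field_simp <;> ring
        rw [heq]
        apply combo4 hv3 hv4 hv1 hv2
        · exact div_nonneg hn1 (by linarith)
        · exact div_nonneg hn1 (by linarith)
        · positivity
        · positivity
        · field_simp; ring
      have := h _ hp (by intro i; fin_cases i; exacts [⟨1, by norm_num⟩, ⟨2, by norm_num⟩])
      have := congrFun this 0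
      simp at this
    · exfalso
      have hcc : b + 1 ≤ 2*a := by omega
      have hn1 : (0:ℚ) ≤ 2*(a:ℚ)-(b:ℚ) := by
        have : (0:ℚ) ≤ ((2*a-b : ℤ) : ℚ) := by exact_mod_cast (by omega : (0:ℤ) ≤ 2*a-b)
        push_cast at this; linarith
      have hn2 : (0:ℚ) ≤ 3*(b:ℚ)-2*(a:ℚ)-4 := by
        have : (0:ℚ) ≤ ((3*b-2*a-4 : ℤ) : ℚ) := by exact_mod_cast (by omega : (0:ℤ) ≤ 3*b-2*a-4)
        push_cast at this; linarith
      have hp : ![(1:ℚ), 1] ∈ convexHull ℚ S := by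
        have heq : ![(1:ℚ), 1] =
            ((2*(a:ℚ)-(b:ℚ))/(2*(b:ℚ))) • ![-(1 : ℚ) / 2, 0]
            + ((3*(b:ℚ)-2*(a:ℚ)-4)/(2*(b:ℚ))) • ![(1 : ℚ) / 2, 0]
            + (0:ℚ) • ![(a : ℚ) / 2, (b : ℚ) / 2]
            + ((2:ℚ)/(b:ℚ)) • ![(a : ℚ) / 2 + 1 / 2, (b : ℚ) / 2] := by
          funext i; fin_cases i <;> simp <;> field_simp <;> ring
        rw [heq]
        apply combo4 hv3 hv4 hv1 hv2
        · exact div_nonneg hn1 (by linarith)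
        · exact div_nonneg hn2 (by linarith)
        · exact le_refl 0
        · positivity
        · field_simp; ring
      have := h _ hp (by intro i; fin_cases i; exacts [⟨1, by norm_num⟩, ⟨1, by norm_num⟩])
      have := congrFun this 0
      simp at this
end

section
/- Let l ≥ 2 be an integer and consider in ℚ² the four points u₁ = ((a−l)/(l+1), b/(l+1)), u₂ = u₁ + (l/(l+1), 0), u₄ = ((l² + a + l)/(2l+1), b/(2l+1)), and the origin, where a, b are integers with 0 ≤ a < b. The horizontal width of the quadrilateral conv(0, u₁, u₂, u₄) at height b/(2l+1) (the height of u₄) equals l(l+2)/(2l+1), which is strictly greater than 1. -/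
/-!
The slice of `C = conv(0, u₁, u₂, u₄)` at the height `h` of `u₄` runs from the point `t • u₁`
of the edge `[0, u₁]` (with `t = (l+1)/(2l+1)`) to `u₄` itself. That nothing of `C` lies outside
this segment is seen from the two half-planes bounded by the line through `0, u₁` and the line
through `u₂, u₄`, both of which contain all four vertices.
-/

open Set

section

variable {K : Type*} [Field K] [LinearOrder K] [IsStrictOrderedRing K]

lemma convexHull_subset_halfPlane {s : Set (Fin 2 → K)} {α β c : K}
    (hs : s ⊆ {p | α * p 0 + β * p 1 ≤ c}) :
    convexHull K s ⊆ {p | α * p 0 + β * p 1 ≤ c} :=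
  convexHull_min hs <| convex_halfSpace_le
    ⟨fun p q => by simp only [Pi.add_apply]; ring,
      fun r p => by simp only [Pi.smul_apply, smul_eq_mul]; ring⟩ c

lemma vec2_mem_segment_of_mem_Icc {x y z h : K} (hx : x ∈ Icc y z) :
    ![x, h] ∈ segment K ![y, h] ![z, h] := by
  obtain ⟨s, t, hs, ht, hst, rfl⟩ := (segment_eq_Icc (hx.1.trans hx.2)).symm ▸ hx
  refine ⟨s, t, hs, ht, hst, ?_⟩
  ext i
  fin_cases i
  · simp
  · simp [← add_mul, hst]

def situation2BPolygon (l a b : K) : Set (Fin 2 → K) :=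
  {0,
    ![(a - l) / (l + 1), b / (l + 1)],
    ![(a - l) / (l + 1) + l / (l + 1), b / (l + 1)],
    ![(l ^ 2 + a + l) / (2 * l + 1), b / (2 * l + 1)]}

variable {l a b : K}

lemma situation2BPolygon_subset_left_halfPlane (hl : 0 ≤ l) (hb : 0 ≤ b) :
    situation2BPolygon l a b ⊆ {p | -b * p 0 + (a - l) * p 1 ≤ 0} := by
  have hl1 : 0 < l + 1 := by positivity
  have h2l : 0 < 2 * l + 1 := by positivity
  simp only [situation2BPolygon, insert_subset_iff, singleton_subset_iff, mem_ofPred_eq,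
    Pi.zero_apply, Matrix.cons_val_zero, Matrix.cons_val_one, Matrix.cons_val_fin_one]
  refine ⟨by simp, ?_, ?_, ?_⟩ <;> field_simp
  all_goals nlinarith [mul_nonneg hb hl, mul_nonneg hb (sq_nonneg l)]

lemma situation2BPolygon_subset_right_halfPlane (hl : 0 ≤ l) (hb : 0 ≤ b) :
    situation2BPolygon l a b ⊆ {p | b * p 0 + ((l + 1) ^ 2 - a) * p 1 ≤ b * (l + 1)} := by
  have hl1 : 0 < l + 1 := by positivity
  have h2l : 0 < 2 * l + 1 := by positivity
  simp only [situation2BPolygon, insert_subset_iff, singleton_subset_iff, mem_ofPred_eq,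
    Pi.zero_apply, Matrix.cons_val_zero, Matrix.cons_val_one, Matrix.cons_val_fin_one]
  refine ⟨by simp only [mul_zero, add_zero]; positivity, ?_, ?_, ?_⟩ <;> field_simp
  all_goals nlinarith [mul_nonneg hb hl, mul_nonneg hb (sq_nonneg l)]

lemma situation2BPolygon_slice_subset (hl : 0 ≤ l) (hb : 0 < b) :
    {x | ![x, b / (2 * l + 1)] ∈ convexHull K (situation2BPolygon l a b)} ⊆
      Icc ((a - l) / (2 * l + 1)) ((a - l) / (2 * l + 1) + l * (l + 2) / (2 * l + 1)) := by
  intro x hx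
  have h2l : 0 < 2 * l + 1 := by positivity
  have hleft := convexHull_subset_halfPlane
    (situation2BPolygon_subset_left_halfPlane (a := a) hl hb.le) hx
  have hright := convexHull_subset_halfPlane
    (situation2BPolygon_subset_right_halfPlane (a := a) hl hb.le) hx
  simp only [mem_ofPred_eq, Matrix.cons_val_zero, Matrix.cons_val_one] at hleft hright
  constructor
  · refine le_of_mul_le_mul_left ?_ hb
    linarith [show b * ((a - l) / (2 * l + 1)) = (a - l) * (b / (2 * l + 1)) by ring]
  · refine le_of_mul_le_mul_left ?_ hb
    have : b * ((a - l) / (2 * l + 1) + l * (l + 2) / (2 * l + 1)) =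
        b * (l + 1) - ((l + 1) ^ 2 - a) * (b / (2 * l + 1)) := by
      field_simp
      ring
    linarith

lemma Icc_subset_situation2BPolygon_slice (hl : 0 ≤ l) :
    Icc ((a - l) / (2 * l + 1)) ((a - l) / (2 * l + 1) + l * (l + 2) / (2 * l + 1)) ⊆
      {x | ![x, b / (2 * l + 1)] ∈ convexHull K (situation2BPolygon l a b)} := by
  intro x hx
  have h2l : 0 < 2 * l + 1 := by positivity
  have hconv := convex_convexHull K (situation2BPolygon l a b)
  have hvert : situation2BPolygon l a b ⊆ convexHull K _ := subset_convexHull K _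
  have hleft : ![(a - l) / (2 * l + 1), b / (2 * l + 1)] ∈
      convexHull K (situation2BPolygon l a b) := by
    have ht : (l + 1) / (2 * l + 1) ∈ Icc (0 : K) 1 :=
      ⟨by positivity, (div_le_one h2l).2 (by linarith)⟩
    convert hconv.smul_mem_of_zero_mem (hvert (mem_insert _ _))
      (hvert (mem_insert_of_mem _ (mem_insert _ _))) ht using 1
    ext i
    fin_cases i <;> simp only [Fin.zero_eta, Fin.mk_one, Pi.smul_apply, smul_eq_mul, Matrix.cons_val_zero, Matrix.cons_val_one, Matrix.cons_val_fin_one] <;>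
      field_simp
  have hright : ![(a - l) / (2 * l + 1) + l * (l + 2) / (2 * l + 1), b / (2 * l + 1)] ∈
      convexHull K (situation2BPolygon l a b) := by
    convert hvert (mem_insert_of_mem _ <| mem_insert_of_mem _ <| mem_insert_of_mem _ rfl) using 1
    ext i
    fin_cases i
    · simp only [Fin.zero_eta, Matrix.cons_val_zero]
      field_simp
      ring
    · rfl
  exact hconv.segment_subset hleft hright (vec2_mem_segment_of_mem_Icc hx)

lemma situation2BPolygon_slice (hl : 0 ≤ l) (hb : 0 < b) :
    {x | ![x, b / (2 * l + 1)] ∈ convexHull K (situation2BPolygon l a b)} =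
      Icc ((a - l) / (2 * l + 1)) ((a - l) / (2 * l + 1) + l * (l + 2) / (2 * l + 1)) :=
  (situation2BPolygon_slice_subset hl hb).antisymm (Icc_subset_situation2BPolygon_slice hl)

lemma one_lt_mul_add_two_div_two_mul_add_one (hl : 1 < l) : 1 < l * (l + 2) / (2 * l + 1) := by
  rw [one_lt_div (by linarith)]
  nlinarith

end

/-- The width computation in Situation 2B: the horizontal slice of
`conv(0, u₁, u₂, u₄)` at the height of `u₄` is an interval of length
`l(l+2)/(2l+1) > 1`. -/
theorem situation2B_width (l a b : ℤ) (hl : 2 ≤ l) (ha : 0 ≤ a) (hab : a < b) :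
    {x : ℚ | (![x, (b : ℚ) / (2 * l + 1)]) ∈ convexHull ℚ
        ({0,
          ![((a : ℚ) - l) / (l + 1), (b : ℚ) / (l + 1)],
          ![((a : ℚ) - l) / (l + 1) + (l : ℚ) / (l + 1), (b : ℚ) / (l + 1)],
          ![((l : ℚ) ^ 2 + a + l) / (2 * l + 1), (b : ℚ) / (2 * l + 1)]} :
          Set (Fin 2 → ℚ))} =
      Set.Icc (((a : ℚ) - l) / (2 * l + 1))
        (((a : ℚ) - l) / (2 * l + 1) + (l : ℚ) * (l + 2) / (2 * l + 1)) ∧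
    1 < (l : ℚ) * (l + 2) / (2 * l + 1) := by
  have hl : (2 : ℚ) ≤ l := by exact_mod_cast hl
  have hb : (0 : ℚ) < b := by exact_mod_cast ha.trans_lt hab
  exact ⟨situation2BPolygon_slice (by linarith) hb,
    one_lt_mul_add_two_div_two_mul_add_one (by linarith)⟩
end
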